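/- arXiv:2402.00882 — 7 statements merged into one kernel-verified Lean document; each statement's English description precedes it below -/
import Mathlib

section
/- The function x(t) = k / (1 + (γ n (p-1)(t-t₀) + A^{1-p})^{1/(1-p)})^{1/n}, where A = (k/x₀)^n − 1, satisfies the ODE dx/dt = γ k^{n(p-1)} x^{1+n(1-p)} (1 − (x/k)^n)^p with initial condition x(t₀) = x₀, on any interval where the inner expression γ n (p-1)(t-t₀) + A^{1-p} is positive. -/
open Real Filter

/-!
Write `U` for the inner expression and `V = 1 + U ^ (1 / (1 - p))`, so that `x = k / V ^ (1 / n)`,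
`(x / k) ^ n = V⁻¹` and `1 - (x / k) ^ n = (V - 1) / V`. Both sides of the ODE reduce to
`γ k U ^ (p / (1 - p)) V ^ (-1 / n - 1)`: the left by the chain rule with `U' = γ n (p - 1)`,
the right by collecting the powers of `k` and of `V`.
-/

theorem HasDerivAt.const_div_rpow_const {f : ℝ → ℝ} {f' t : ℝ} (hf : HasDerivAt f f' t)
    (hpos : 0 < f t) (k r : ℝ) :
    HasDerivAt (fun s => k / f s ^ r) (-(k * r) * f t ^ (-r - 1) * f') t := by
  have hev : (fun s => k / f s ^ r) =ᶠ[nhds t] fun s => k * f s ^ (-r) := by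
    filter_upwards [hf.continuousAt.eventually (lt_mem_nhds hpos)] with s hs
    rw [rpow_neg hs.le, div_eq_mul_inv]
  refine (((hf.rpow_const (Or.inl hpos.ne')).const_mul k).congr_of_eventuallyEq hev).congr_deriv ?_
  ring

theorem hasDerivAt_affine_rpow {a b t₀ t q : ℝ} (hpos : 0 < a * (t - t₀) + b) :
    HasDerivAt (fun s => (a * (s - t₀) + b) ^ q) (a * q * (a * (t - t₀) + b) ^ (q - 1)) t := by
  have h : HasDerivAt (fun s => a * (s - t₀) + b) a t := by
    simpa using (((hasDerivAt_id t).sub_const t₀).const_mul a).add_const b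
  exact (h.rpow_const (Or.inl hpos.ne')).congr_deriv (by ring)

theorem growth_rate_div_rpow (γ p : ℝ) {n k V : ℝ} (hn : n ≠ 0) (hk : 0 < k) (hV : 1 ≤ V) :
    γ * k ^ (n * (p - 1)) * (k / V ^ (1 / n)) ^ (1 + n * (1 - p)) *
        (1 - (k / V ^ (1 / n) / k) ^ n) ^ p =
      γ * k * (V - 1) ^ p * V ^ (-1 / n - 1) := by
  have hV0 : 0 < V := by linarith
  have hfrac : (k / V ^ (1 / n) / k) ^ n = V⁻¹ := by
    rw [div_div_cancel_left' hk.ne', ← rpow_neg hV0.le, ← rpow_mul hV0.le, ← rpow_neg_one]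
    congr 1
    field_simp
  have hcurve : (k / V ^ (1 / n)) ^ (1 + n * (1 - p)) =
      k ^ (1 + n * (1 - p)) * V ^ (-(1 / n) * (1 + n * (1 - p))) := by
    rw [div_rpow hk.le (by positivity), neg_mul, rpow_neg hV0.le, rpow_mul hV0.le, div_eq_mul_inv]
  have hgap : (1 - V⁻¹) ^ p = (V - 1) ^ p * V ^ (-p) := by
    rw [rpow_neg hV0.le, ← inv_rpow hV0.le, ← mul_rpow (by linarith) (by positivity)]
    congr 1
    field_simp
  calc _ = γ * (k ^ (n * (p - 1)) * k ^ (1 + n * (1 - p))) * (V - 1) ^ p *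
        (V ^ (-(1 / n) * (1 + n * (1 - p))) * V ^ (-p)) := by
          rw [hfrac, hcurve, hgap]; ring
    _ = _ := by
      rw [← rpow_add hk, ← rpow_add hV0]
      congr 2
      · ring_nf; rw [rpow_one]
      · field_simp; ring

theorem general_growth_curve_solves_ODE_general
    (γ n k x₀ p t₀ : ℝ) (hn : 0 < n) (hx₀ : 0 < x₀) (hx₀k : x₀ < k)
    (hp : (1 < p ∧ p < 1 + 1 / n) ∨ (0 < p ∧ p < 1))
    (A : ℝ) (hA : A = (k / x₀) ^ n - 1)
    (x : ℝ → ℝ)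
    (hx : ∀ t, x t =
      k / (1 + (γ * n * (p - 1) * (t - t₀) + A ^ (1 - p)) ^ (1 / (1 - p))) ^ (1 / n)) :
    x t₀ = x₀ ∧
      ∀ t, 0 < γ * n * (p - 1) * (t - t₀) + A ^ (1 - p) →
        HasDerivAt x
          (γ * k ^ (n * (p - 1)) * (x t) ^ (1 + n * (1 - p)) * (1 - (x t / k) ^ n) ^ p) t := by
  have hk : 0 < k := hx₀.trans hx₀k
  have hp1 : 1 - p ≠ 0 := by
    rcases hp with ⟨h, -⟩ | ⟨-, h⟩ <;> intro h' <;> linarith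
  have hA0 : 0 ≤ A := by
    rw [hA, sub_nonneg]
    exact one_le_rpow ((one_le_div hx₀).2 hx₀k.le) hn.le
  obtain rfl : x = _ := funext hx
  refine ⟨?_, fun t ht => ?_⟩ <;> beta_reduce
  · rw [sub_self, mul_zero, zero_add, ← rpow_mul hA0, mul_one_div_cancel hp1, rpow_one, hA,
      add_sub_cancel, ← rpow_mul (by positivity), mul_one_div_cancel hn.ne', rpow_one,
      div_div_cancel₀ hk.ne']
  · have hderiv := ((hasDerivAt_affine_rpow (q := 1 / (1 - p)) ht).const_add 1).const_div_rpow_const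
      (by positivity) k (1 / n)
    convert hderiv using 1
    rw [growth_rate_div_rpow γ p hn.ne' hk (le_add_of_nonneg_right (by positivity))]
    have hq : 1 / (1 - p) - 1 = 1 / (1 - p) * p := by field_simp; ring
    rw [add_sub_cancel_left, ← rpow_mul ht.le, neg_div, hq]
    field_simp
    ring

/-- The general growth curve satisfies the generalized growth ODE with initial
condition `x t₀ = x₀`, at every time `t` where the inner expression is positive. -/
theorem general_growth_curve_solves_ODE
    (γ n k x₀ p t₀ : ℝ) (hγ : 0 < γ) (hn : 0 < n) (hx₀ : 0 < x₀) (hx₀k : x₀ < k)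
    (hp : (1 < p ∧ p < 1 + 1 / n) ∨ (0 < p ∧ p < 1))
    (A : ℝ) (hA : A = (k / x₀) ^ n - 1)
    (x : ℝ → ℝ)
    (hx : ∀ t, x t =
      k / (1 + (γ * n * (p - 1) * (t - t₀) + A ^ (1 - p)) ^ (1 / (1 - p))) ^ (1 / n)) :
    x t₀ = x₀ ∧
      ∀ t, 0 < γ * n * (p - 1) * (t - t₀) + A ^ (1 - p) →
        HasDerivAt x
          (γ * k ^ (n * (p - 1)) * (x t) ^ (1 + n * (1 - p)) * (1 - (x t / k) ^ n) ^ p) t :=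
  general_growth_curve_solves_ODE_general γ n k x₀ p t₀ hn hx₀ hx₀k hp A hA x hx
end

section
/- For fixed t ≥ t₀, γ > 0, n > 0, 0 < x₀ < k, with A = (k/x₀)^n − 1 > 0, the limit as p → 1 of (γ n (p-1)(t-t₀) + A^{1-p})^{1/(1-p)} equals A · e^{−γ n (t−t₀)}. -/
open Real Filter Topology

/-! Put `s = 1 - p`. The base becomes `f s = A ^ s - γ n (t - t₀) s`, with `f 0 = 1` and
`f' 0 = log A - γ n (t - t₀)`, so `f s ^ (1 / s) = exp (log (f s) / s)` and `log (f s) / s`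
is a difference quotient of `log ∘ f` at `0`; its limit `log A - γ n (t - t₀)` exponentiates
to `A * exp (-γ n (t - t₀))`. -/

theorem tendsto_rpow_one_div_of_hasDerivAt_zero {f : ℝ → ℝ} {L : ℝ} (hf : HasDerivAt f L 0)
    (hf0 : f 0 = 1) :
    Tendsto (fun s => f s ^ (1 / s)) (𝓝[≠] 0) (𝓝 (exp L)) := by
  have hlog : HasDerivAt (fun s => log (f s)) L 0 := by
    simpa [hf0] using hf.log (by simp [hf0])
  have hslope : Tendsto (fun s => log (f s) / s) (𝓝[≠] 0) (𝓝 L) := by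
    refine (hasDerivAt_iff_tendsto_slope.mp hlog).congr fun s => ?_
    simp [slope, hf0, div_eq_inv_mul]
  have hpos : ∀ᶠ s in 𝓝[≠] 0, 0 < f s :=
    (continuousAt_const.eventually_lt hf.continuousAt (by simp [hf0])).filter_mono
      nhdsWithin_le_nhds
  refine ((continuous_exp.tendsto L).comp hslope).congr' ?_
  filter_upwards [hpos] with s hs
  rw [Function.comp_apply, rpow_def_of_pos hs, mul_one_div]

theorem hasDerivAt_rpow_sub_mul_zero {A : ℝ} (hA : 0 < A) (c : ℝ) :
    HasDerivAt (fun s => A ^ s - c * s) (log A - c) 0 := by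
  have h := (hasStrictDerivAt_const_rpow hA 0).hasDerivAt.sub ((hasDerivAt_id' 0).const_mul c)
  rwa [rpow_zero, one_mul, mul_one] at h

theorem tendsto_rpow_sub_mul_rpow_one_div {A : ℝ} (hA : 0 < A) (c : ℝ) :
    Tendsto (fun s => (A ^ s - c * s) ^ (1 / s)) (𝓝[≠] 0) (𝓝 (A * exp (-c))) := by
  have h := tendsto_rpow_one_div_of_hasDerivAt_zero (hasDerivAt_rpow_sub_mul_zero hA c) (by simp)
  rw [exp_neg, ← div_eq_mul_inv]
  rwa [exp_sub, exp_log hA] at h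

theorem limit_p_to_one_Richards_general
    (γ n k x₀ t₀ t : ℝ) (hn : 0 < n) (hx₀ : 0 < x₀) (hx₀k : x₀ < k)
    (A : ℝ) (hA : A = (k / x₀) ^ n - 1) :
    Tendsto (fun p : ℝ => (γ * n * (p - 1) * (t - t₀) + A ^ (1 - p)) ^ (1 / (1 - p)))
      (nhdsWithin 1 {1}ᶜ) (nhds (A * Real.exp (-(γ * n * (t - t₀))))) := by
  have hA0 : 0 < A := by
    rw [hA, sub_pos]
    exact one_lt_rpow ((one_lt_div hx₀).mpr hx₀k) hn
  have hflip : Tendsto (fun p : ℝ => 1 - p) (𝓝[≠] 1) (𝓝[≠] 0) := by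
    have h := Filter.map_subLeft_nhdsNE (c := (1 : ℝ)) (a := 1)
    rw [sub_self] at h
    exact h.le
  refine ((tendsto_rpow_sub_mul_rpow_one_div hA0 (γ * n * (t - t₀))).comp hflip).congr fun p => ?_
  simp only [Function.comp_apply]
  ring_nf

/-- As `p → 1`, the exponent expression of the general curve converges to
`A * exp (-γ n (t - t₀))`, recovering the Bertalanffy–Richards curve. -/
theorem limit_p_to_one_Richards
    (γ n k x₀ t₀ t : ℝ) (hγ : 0 < γ) (hn : 0 < n) (hx₀ : 0 < x₀) (hx₀k : x₀ < k)
    (ht : t₀ ≤ t) (A : ℝ) (hA : A = (k / x₀) ^ n - 1) :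
    Tendsto (fun p : ℝ => (γ * n * (p - 1) * (t - t₀) + A ^ (1 - p)) ^ (1 / (1 - p)))
      (nhdsWithin 1 {1}ᶜ) (nhds (A * Real.exp (-(γ * n * (t - t₀))))) :=
  limit_p_to_one_Richards_general γ n k x₀ t₀ t hn hx₀ hx₀k A hA
end

section
/- Let 0 < x₀ < k, γ' > 0, p > 1, t ≥ t₀. Then the limit as p → 1⁺ of (γ'(p−1)(t−t₀) + (ln(k/x₀))^{1−p})^{1/(1−p)} equals ln(k/x₀) · e^{−γ'(t−t₀)}. Hence the Hyper-Gompertz curve k·exp(−(γ'(p−1)(t−t₀) + (ln(k/x₀))^{1−p})^{1/(1−p)}) converges pointwise to the Gompertz curve k·exp(−ln(k/x₀)·e^{−γ'(t−t₀)}) as p → 1⁺. -/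
/-! The base `A p = γ' (p - 1) (t - t₀) + L ^ (1 - p)`, with `L = ln (k / x₀) > 0`, equals `1` at
`p = 1`, so `A p ^ (1 / (1 - p)) = exp (-(log (A p) - log (A 1)) / (p - 1))` and the exponent tends
to `-(log ∘ A)'(1) = -A'(1) = log L - γ' (t - t₀)`. -/

open Real Filter Topology

theorem tendsto_rpow_one_div_one_sub_of_hasDerivAt {f : ℝ → ℝ} {f' : ℝ} (hf : HasDerivAt f f' 1)
    (hf1 : f 1 = 1) :
    Tendsto (fun p => f p ^ (1 / (1 - p))) (𝓝[≠] 1) (𝓝 (exp (-f'))) := by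
  have hlog : HasDerivAt (fun p => log (f p)) f' 1 := by
    simpa [hf1] using hf.log (by simp [hf1])
  have hslope := hasDerivAt_iff_tendsto_slope.mp hlog
  have hpos : ∀ᶠ p in 𝓝[≠] 1, 0 < f p :=
    nhdsWithin_le_nhds (hf.continuousAt.eventually (lt_mem_nhds (by simp [hf1])))
  refine ((continuous_exp.tendsto _).comp hslope.neg).congr' ?_
  filter_upwards [hpos] with p hp
  rw [Function.comp_apply, rpow_def_of_pos hp, slope_def_field, hf1, log_one, sub_zero,
    ← neg_sub p, div_neg, mul_neg, div_eq_mul_one_div]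

theorem hasDerivAt_mul_sub_one_mul_add_rpow_one_sub (a b : ℝ) {L : ℝ} (hL : 0 < L) :
    HasDerivAt (fun p => a * (p - 1) * b + L ^ (1 - p)) (a * b - log L) 1 := by
  have hlin : HasDerivAt (fun p : ℝ => a * (p - 1) * b) (a * b) 1 := by
    simpa using (((hasDerivAt_id (1 : ℝ)).sub_const 1).const_mul a).mul_const b
  have hpow : HasDerivAt (fun p : ℝ => L ^ (1 - p)) (-log L) 1 := by
    simpa using ((hasDerivAt_id (1 : ℝ)).const_sub 1).const_rpow hL
  exact (hlin.add hpow).congr_deriv (by ring)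

theorem hyperGompertz_to_Gompertz_general
    (γ' k x₀ t₀ t : ℝ) (hx₀ : 0 < x₀) (hx₀k : x₀ < k) :
    Tendsto
      (fun p : ℝ => (γ' * (p - 1) * (t - t₀) + (Real.log (k / x₀)) ^ (1 - p)) ^ (1 / (1 - p)))
      (nhdsWithin 1 (Set.Ioi 1))
      (nhds (Real.log (k / x₀) * Real.exp (-(γ' * (t - t₀))))) ∧
    Tendsto
      (fun p : ℝ => k * Real.exp
        (-((γ' * (p - 1) * (t - t₀) + (Real.log (k / x₀)) ^ (1 - p)) ^ (1 / (1 - p)))))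
      (nhdsWithin 1 (Set.Ioi 1))
      (nhds (k * Real.exp (-(Real.log (k / x₀) * Real.exp (-(γ' * (t - t₀))))))) := by
  have hL : 0 < log (k / x₀) := log_pos ((one_lt_div hx₀).2 hx₀k)
  have hlim := (tendsto_rpow_one_div_one_sub_of_hasDerivAt
    (hasDerivAt_mul_sub_one_mul_add_rpow_one_sub γ' (t - t₀) hL) (by simp)).mono_left
    (nhdsGT_le_nhdsNE 1)
  have hGompertz : exp (-(γ' * (t - t₀) - log (log (k / x₀)))) =
      log (k / x₀) * exp (-(γ' * (t - t₀))) := by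
    rw [neg_sub, sub_eq_neg_add, exp_add, exp_log hL, mul_comm]
  rw [hGompertz] at hlim
  exact ⟨hlim, ((continuous_const.mul (continuous_exp.comp continuous_neg)).tendsto _).comp hlim⟩

/-- As `p → 1⁺`, the Hyper-Gompertz exponent converges to `ln(k/x₀) e^{-γ'(t-t₀)}`,
hence the Hyper-Gompertz curve converges pointwise to the Gompertz curve. -/
theorem hyperGompertz_to_Gompertz
    (γ' k x₀ t₀ t : ℝ) (hγ : 0 < γ') (hx₀ : 0 < x₀) (hx₀k : x₀ < k) (ht : t₀ ≤ t) :
    Tendsto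
      (fun p : ℝ => (γ' * (p - 1) * (t - t₀) + (Real.log (k / x₀)) ^ (1 - p)) ^ (1 / (1 - p)))
      (nhdsWithin 1 (Set.Ioi 1))
      (nhds (Real.log (k / x₀) * Real.exp (-(γ' * (t - t₀))))) ∧
    Tendsto
      (fun p : ℝ => k * Real.exp
        (-((γ' * (p - 1) * (t - t₀) + (Real.log (k / x₀)) ^ (1 - p)) ^ (1 / (1 - p)))))
      (nhdsWithin 1 (Set.Ioi 1))
      (nhds (k * Real.exp (-(Real.log (k / x₀) * Real.exp (-(γ' * (t - t₀))))))) :=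
  hyperGompertz_to_Gompertz_general γ' k x₀ t₀ t hx₀ hx₀k
end

section
/- Let 1 < p < 1 + 1/n, n > 0, γ > 0, 0 < x₀ < k, A = (k/x₀)^n − 1. The inflection time t_inf = t₀ + ((np/(1+n(1−p)))^{1−p} − A^{1−p})/(n γ(p−1)) satisfies t_inf ≥ t₀ if and only if p ≤ (1 + 1/n)(1 − (x₀/k)^n). -/
open Real

/-- Case 1: the inflection time is `≥ t₀` iff `p ≤ (1 + 1/n)(1 - (x₀/k)^n)`. -/
theorem case1_inflection_visible_iff
    (γ n k x₀ p t₀ : ℝ) (hγ : 0 < γ) (hn : 0 < n) (hx₀ : 0 < x₀) (hx₀k : x₀ < k)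
    (hp1 : 1 < p) (hp2 : p < 1 + 1 / n)
    (A : ℝ) (hA : A = (k / x₀) ^ n - 1)
    (tInf : ℝ)
    (htInf : tInf = t₀ + ((n * p / (1 + n * (1 - p))) ^ (1 - p) - A ^ (1 - p)) / (n * γ * (p - 1))) :
    t₀ ≤ tInf ↔ p ≤ (1 + 1 / n) * (1 - (x₀ / k) ^ n) := by
  have hk : 0 < k := hx₀.trans hx₀k
  have hr1 : (1 : ℝ) < k / x₀ := (one_lt_div hx₀).2 hx₀k
  have hr : (1 : ℝ) < (k / x₀) ^ n :=
    (Real.one_lt_rpow_iff_of_pos (by positivity)).2 (Or.inl ⟨hr1, hn⟩)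
  have hApos : 0 < A := by rw [hA]; linarith
  have hd : 0 < 1 + n * (1 - p) := by
    have h := (lt_div_iff₀ hn).1 (show p - 1 < 1 / n by linarith)
    nlinarith
  have hB : 0 < n * p / (1 + n * (1 - p)) := by positivity
  have hp1' : 0 < p - 1 := by linarith
  have hD : 0 < n * γ * (p - 1) := by positivity
  have hz : (1 : ℝ) - p < 0 := by linarith
  have hxk : (x₀ / k) ^ n = ((k / x₀) ^ n)⁻¹ := by
    rw [show x₀ / k = (k / x₀)⁻¹ by rw [inv_div], Real.inv_rpow (by positivity)]
  have key : n * p / (1 + n * (1 - p)) ≤ A ↔ p ≤ (1 + 1 / n) * (1 - (x₀ / k) ^ n) := by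
    rw [div_le_iff₀ hd, hxk, hA]
    set R := (k / x₀) ^ n with hR
    have hRpos : 0 < R := by linarith
    have hnR : 0 < n * R := by positivity
    have heq : (1 + 1 / n) * (1 - R⁻¹) = (n + 1) * (R - 1) / (n * R) := by
      field_simp
    rw [heq, le_div_iff₀ hnR]
    constructor <;> intro h <;> nlinarith
  rw [htInf, le_add_iff_nonneg_right, div_nonneg_iff]
  constructor
  · rintro (⟨h1, _⟩ | ⟨_, h2⟩)
    · rw [sub_nonneg, Real.rpow_le_rpow_iff_of_neg hApos hB hz] at h1
      exact key.1 h1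
    · linarith
  · intro h
    left
    refine ⟨?_, hD.le⟩
    rw [sub_nonneg, Real.rpow_le_rpow_iff_of_neg hApos hB hz]
    exact key.2 h
end

section
/- Let 0 < p < 1 with m = 1/(1−p) ∈ ℕ even, γ, n > 0, 0 < x₀ < k, A = (k/x₀)^n − 1. Then x(t) = k/(1 + g(t)^m)^{1/n}, g(t) = −(γn/m)(t−t₀) + A^{1/m}, attains its maximum value k exactly at t* = t₀ + m A^{1/m}/(γ n); moreover x is strictly increasing on [t₀, t*] and strictly decreasing on [t*, ∞). -/
open Real

/-- Case 3a: the curve attains its maximum value `k` exactly at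
`t* = t₀ + m A^{1/m}/(γ n)`; it increases strictly before and decreases strictly after. -/
theorem case3a_maximum
    (γ n k x₀ p t₀ : ℝ) (hγ : 0 < γ) (hn : 0 < n) (hx₀ : 0 < x₀) (hx₀k : x₀ < k)
    (hp1 : 0 < p) (hp2 : p < 1)
    (m : ℕ) (hm : (m : ℝ) = 1 / (1 - p)) (hmeven : Even m)
    (A : ℝ) (hA : A = (k / x₀) ^ n - 1)
    (g x : ℝ → ℝ)
    (hg : ∀ t, g t = -(γ * n / m) * (t - t₀) + A ^ ((1 : ℝ) / m))
    (hx : ∀ t, x t = k / (1 + (g t) ^ m) ^ (1 / n))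
    (tstar : ℝ) (htstar : tstar = t₀ + m * A ^ ((1 : ℝ) / m) / (γ * n)) :
    x tstar = k ∧ (∀ t, t ≠ tstar → x t < k) ∧
      StrictMonoOn x (Set.Icc t₀ tstar) ∧ StrictAntiOn x (Set.Ici tstar) := by
  have hk : 0 < k := hx₀.trans hx₀k
  have hm1 : (1:ℝ) < (m:ℝ) := by
    rw [hm, lt_div_iff₀ (by linarith)]; linarith
  have hmpos : (0:ℝ) < (m:ℝ) := by linarith
  have hmne : m ≠ 0 := by
    have : (1:ℕ) < m := by exact_mod_cast hm1
    omega
  have hA0 : 0 < A := by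
    have h1 : (1:ℝ) < k / x₀ := (one_lt_div hx₀).2 hx₀k
    have h2 : (1:ℝ) < (k / x₀) ^ n :=
      (Real.one_lt_rpow_iff_of_pos (by linarith)).2 (Or.inl ⟨h1, hn⟩)
    rw [hA]; linarith
  set B : ℝ := A ^ ((1:ℝ)/m) with hBdef
  have hB : 0 < B := Real.rpow_pos_of_pos hA0 _
  set c : ℝ := γ * n / m with hcdef
  have hc : 0 < c := by positivity
  have hgt : ∀ t, g t = c * (tstar - t) := by
    intro t
    rw [hg t, htstar, hcdef]
    field_simp
    ring
  -- helper monotonicity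
  have hφ : ∀ u v : ℝ, 0 ≤ u → u < v →
      k / (1 + v) ^ (1/n) < k / (1 + u) ^ (1/n) := by
    intro u v hu huv
    have h1 : (0:ℝ) < 1 + u := by linarith
    have h2 : (1 + u : ℝ) ^ (1/n) < (1 + v) ^ (1/n) :=
      Real.rpow_lt_rpow h1.le (by linarith) (by positivity)
    have h3 : (0:ℝ) < (1 + u) ^ (1/n) := Real.rpow_pos_of_pos h1 _
    exact div_lt_div_of_pos_left hk h3 h2
  have hxval : ∀ t, x t = k / (1 + (c * (tstar - t)) ^ m) ^ (1/n) := by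
    intro t; rw [hx t, hgt t]
  have hxstar : x tstar = k := by
    rw [hxval tstar]
    simp [zero_pow hmne, Real.one_rpow]
  refine ⟨hxstar, ?_, ?_, ?_⟩
  · intro t ht
    have hb : c * (tstar - t) ≠ 0 := by
      have : tstar - t ≠ 0 := sub_ne_zero.2 (Ne.symm ht)
      positivity
    have hb2 : 0 < (c * (tstar - t)) ^ m := hmeven.pow_pos hb
    have := hφ 0 ((c * (tstar - t)) ^ m) le_rfl hb2
    rw [hxval t]
    simpa [Real.one_rpow] using this
  · intro s hs t ht hst
    simp only [Set.mem_Icc] at hs ht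
    have h1 : 0 ≤ c * (tstar - t) := by
      have : 0 ≤ tstar - t := by linarith [ht.2]
      positivity
    have h2 : c * (tstar - t) < c * (tstar - s) := by
      apply mul_lt_mul_of_pos_left (by linarith) hc
    have h3 : (c * (tstar - t)) ^ m < (c * (tstar - s)) ^ m :=
      pow_lt_pow_left₀ h2 h1 hmne
    have h4 : 0 ≤ (c * (tstar - t)) ^ m := pow_nonneg h1 m
    rw [hxval s, hxval t]
    exact hφ _ _ h4 h3
  · intro s hs t ht hst
    simp only [Set.mem_Ici] at hs ht
    have e1 : (c * (tstar - s)) ^ m = (c * (s - tstar)) ^ m := by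
      rw [show c * (s - tstar) = -(c * (tstar - s)) by ring, hmeven.neg_pow]
    have e2 : (c * (tstar - t)) ^ m = (c * (t - tstar)) ^ m := by
      rw [show c * (t - tstar) = -(c * (tstar - t)) by ring, hmeven.neg_pow]
    have h1 : 0 ≤ c * (s - tstar) := by
      have : 0 ≤ s - tstar := by linarith
      positivity
    have h2 : c * (s - tstar) < c * (t - tstar) := by
      apply mul_lt_mul_of_pos_left (by linarith) hc
    have h3 : (c * (s - tstar)) ^ m < (c * (t - tstar)) ^ m :=
      pow_lt_pow_left₀ h2 h1 hmne
    have h4 : 0 ≤ (c * (s - tstar)) ^ m := pow_nonneg h1 m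
    rw [hxval s, hxval t, e1, e2]
    exact hφ _ _ h4 h3
end

section
/- Let m ∈ ℕ be odd with m ≥ 1, γ, n > 0, 0 < x₀ < k, A = (k/x₀)^n − 1, and g(t) = −(γn/m)(t−t₀) + A^{1/m}. Then with t₁ = t₀ + m(1 + A^{1/m})/(γ n), the function x(t) = k/(1 + g(t)^m)^{1/n} is well defined on [t₀, t₁) (the denominator base 1 + g(t)^m is positive there), is strictly increasing on [t₀, t₁), and x(t) → ∞ as t → t₁⁻. -/
open Real Filter Topology

/-!
Write `g(t) = -c (t - t₀) + A^{1/m}` with `c = γ n / m > 0`. Then `g` is strictly decreasing and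
`g(t₁) = -1`, so `g(t) > -1` for `t < t₁`; as `m` is odd, `y ↦ y ^ m` is strictly increasing, whence
`1 + g(t)^m > 0` on `(-∞, t₁)`, it decreases strictly there, and it tends to `1 + (-1)^m = 0` at `t₁`.
The map `y ↦ k / y^{1/n}` is strictly decreasing on `(0, ∞)` and tends to `∞` as `y → 0⁺`.
-/

theorem Odd.one_add_pow_pos {R : Type*} [Ring R] [LinearOrder R] [IsStrictOrderedRing R]
    {m : ℕ} (hm : Odd m) {y : R} (hy : -1 < y) : 0 < 1 + y ^ m := by
  have h : (-1 : R) ^ m < y ^ m := hm.strictMono_pow hy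
  rw [hm.neg_one_pow] at h
  exact neg_lt_iff_pos_add'.1 h

theorem StrictAntiOn.div_rpow_strictMonoOn {α : Type*} [Preorder α] {f : α → ℝ} {s : Set α}
    (hf : StrictAntiOn f s) (hpos : ∀ t ∈ s, 0 < f t) {k p : ℝ} (hk : 0 < k) (hp : 0 < p) :
    StrictMonoOn (fun t => k / f t ^ p) s := fun _ ha b hb hab =>
  div_lt_div_of_pos_left hk (rpow_pos_of_pos (hpos b hb) p)
    (rpow_lt_rpow (hpos b hb).le (hf ha hb hab) hp)

theorem tendsto_div_rpow_nhdsGT_zero_atTop {k p : ℝ} (hk : 0 < k) (hp : 0 < p) :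
    Tendsto (fun y : ℝ => k / y ^ p) (𝓝[>] 0) atTop := by
  refine ((tendsto_rpow_neg_nhdsGT_zero (neg_lt_zero.2 hp)).const_mul_atTop hk).congr' ?_
  filter_upwards [self_mem_nhdsWithin] with y hy
  rw [rpow_neg (le_of_lt hy), div_eq_mul_inv]

theorem case3b_explosion_general
    (γ n k x₀ : ℝ) (t₀ : ℝ) (hγ : 0 < γ) (hn : 0 < n) (hx₀ : 0 < x₀) (hx₀k : x₀ < k)
    (m : ℕ) (hm : Odd m)
    (A : ℝ)
    (g x : ℝ → ℝ)
    (hg : ∀ t, g t = -(γ * n / m) * (t - t₀) + A ^ ((1 : ℝ) / m))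
    (hx : ∀ t, x t = k / (1 + (g t) ^ m) ^ (1 / n))
    (t₁ : ℝ) (ht₁ : t₁ = t₀ + m * (1 + A ^ ((1 : ℝ) / m)) / (γ * n)) :
    (∀ t ∈ Set.Ico t₀ t₁, 0 < 1 + (g t) ^ m) ∧
      StrictMonoOn x (Set.Ico t₀ t₁) ∧
      Tendsto x (nhdsWithin t₁ (Set.Iio t₁)) atTop := by
  have hk : 0 < k := hx₀.trans hx₀k
  have hm₀ : (0 : ℝ) < m := by exact_mod_cast hm.pos
  have hg_anti : StrictAnti g := fun s t hst => by
    have hc : 0 < γ * n / m := by positivity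
    rw [hg, hg]
    nlinarith
  have hg_t₁ : g t₁ = -1 := by
    rw [hg, ht₁]
    field_simp
    ring
  have hbase_pos : ∀ t < t₁, 0 < 1 + g t ^ m := fun t ht =>
    hm.one_add_pow_pos (hg_t₁ ▸ hg_anti ht)
  have hbase_anti : StrictAnti fun t => 1 + g t ^ m := fun s t hst => by
    simpa using hm.strictMono_pow (hg_anti hst)
  have hbase_cont : Continuous fun t => 1 + g t ^ m := by
    rw [show g = _ from funext hg]
    fun_prop
  have hbase_lim : Tendsto (fun t => 1 + g t ^ m) (𝓝[<] t₁) (𝓝[>] 0) := by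
    refine tendsto_nhdsWithin_of_tendsto_nhds_of_eventually_within _ ?_
      (eventually_nhdsWithin_of_forall hbase_pos)
    simpa [hg_t₁, hm.neg_one_pow] using (hbase_cont.tendsto t₁).mono_left nhdsWithin_le_nhds
  rw [show x = _ from funext hx]
  exact ⟨fun t ht => hbase_pos t ht.2,
    hbase_anti.strictAntiOn _ |>.div_rpow_strictMonoOn (fun t ht => hbase_pos t ht.2) hk
      (by positivity),
    (tendsto_div_rpow_nhdsGT_zero_atTop hk (by positivity)).comp hbase_lim⟩

/-- Case 3b (`m` odd): the curve is well defined and strictly increasing on `[t₀, t₁)`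
and explodes as `t → t₁⁻`. -/
theorem case3b_explosion
    (γ n k x₀ : ℝ) (t₀ : ℝ) (hγ : 0 < γ) (hn : 0 < n) (hx₀ : 0 < x₀) (hx₀k : x₀ < k)
    (m : ℕ) (hm : Odd m) (hm1 : 1 ≤ m)
    (A : ℝ) (hA : A = (k / x₀) ^ n - 1)
    (g x : ℝ → ℝ)
    (hg : ∀ t, g t = -(γ * n / m) * (t - t₀) + A ^ ((1 : ℝ) / m))
    (hx : ∀ t, x t = k / (1 + (g t) ^ m) ^ (1 / n))
    (t₁ : ℝ) (ht₁ : t₁ = t₀ + m * (1 + A ^ ((1 : ℝ) / m)) / (γ * n)) :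
    (∀ t ∈ Set.Ico t₀ t₁, 0 < 1 + (g t) ^ m) ∧
      StrictMonoOn x (Set.Ico t₀ t₁) ∧
      Tendsto x (nhdsWithin t₁ (Set.Iio t₁)) atTop :=
  case3b_explosion_general γ n k x₀ t₀ hγ hn hx₀ hx₀k m hm A g x hg hx t₁ ht₁
end

section
/- Let m ∈ ℕ be even, m ≥ 2, γ, n > 0, 0 < x₀ < k, A = (k/x₀)^n − 1, g(t) = −(γn/m)(t−t₀) + A^{1/m}. The equation (m+n)·u^m = n(m−1) in u has exactly two real solutions u = ±(n(m−1)/(n+m))^{1/m}, and at the corresponding times t = t₀ + m(A^{1/m} ∓ (n(m−1)/(n+m))^{1/m})/(γn), the curve x(t) = k/(1+g(t)^m)^{1/n} takes the common value k·((n+m)/(m(n+1)))^{1/n}. -/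
open Real

/-- Case 3a: the equation `(m+n) u^m = n(m-1)` has exactly the two solutions
`u = ±(n(m-1)/(n+m))^{1/m}`, and at the corresponding times the curve takes the
common value `k ((n+m)/(m(n+1)))^{1/n}`. -/
theorem case3a_inflection_values
    (γ n k x₀ t₀ : ℝ) (hγ : 0 < γ) (hn : 0 < n) (hx₀ : 0 < x₀) (hx₀k : x₀ < k)
    (m : ℕ) (hmeven : Even m) (hm2 : 2 ≤ m)
    (A : ℝ) (hA : A = (k / x₀) ^ n - 1)
    (g x : ℝ → ℝ)
    (hg : ∀ t, g t = -(γ * n / m) * (t - t₀) + A ^ ((1 : ℝ) / m))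
    (hx : ∀ t, x t = k / (1 + (g t) ^ m) ^ (1 / n))
    (c : ℝ) (hc : c = (n * (m - 1) / (n + m)) ^ ((1 : ℝ) / m)) :
    {u : ℝ | ((m : ℝ) + n) * u ^ m = n * ((m : ℝ) - 1)} = {c, -c} ∧
      x (t₀ + m * (A ^ ((1 : ℝ) / m) - c) / (γ * n)) =
        k * ((n + m) / (m * (n + 1))) ^ (1 / n) ∧
      x (t₀ + m * (A ^ ((1 : ℝ) / m) + c) / (γ * n)) =
        k * ((n + m) / (m * (n + 1))) ^ (1 / n) := by
  have h2m : (2:ℝ) ≤ (m:ℝ) := by exact_mod_cast hm2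
  have hm0 : (m:ℝ) ≠ 0 := by linarith
  have hmn : (0:ℝ) < (m:ℝ) + n := by linarith
  have hb : 0 < n * ((m:ℝ) - 1) / (n + m) := by
    apply div_pos (mul_pos hn (by linarith)) (by linarith)
  have hc0 : 0 < c := by rw [hc]; exact Real.rpow_pos_of_pos hb _
  have hcm : c ^ m = n * ((m:ℝ) - 1) / (n + m) := by
    rw [hc, ← Real.rpow_natCast ((n * ((m:ℝ) - 1) / (n + m)) ^ ((1:ℝ)/m)) m,
      ← Real.rpow_mul hb.le, one_div_mul_cancel hm0, Real.rpow_one]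
  have hmne : m ≠ 0 := by omega
  have hset : {u : ℝ | ((m : ℝ) + n) * u ^ m = n * ((m : ℝ) - 1)} = {c, -c} := by
    ext u
    simp only [Set.mem_setOf_eq, Set.mem_insert_iff, Set.mem_singleton_iff]
    constructor
    · intro h
      have hum : u ^ m = c ^ m := by
        rw [hcm]; field_simp at h ⊢; linarith
      have habs : |u| ^ m = |c| ^ m := by
        rw [hmeven.pow_abs, hmeven.pow_abs, hum]
      have : |u| = |c| :=
        (pow_left_strictMonoOn₀ hmne).eq_iff_eq (abs_nonneg u) (abs_nonneg c) |>.mp habs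
      rcases abs_eq_abs.mp this with h' | h'
      · exact Or.inl h'
      · exact Or.inr h'
    · rintro (rfl | rfl)
      · rw [hcm]; field_simp; ring
      · rw [hmeven.neg_pow, hcm]; field_simp; ring
  have hbase : (0:ℝ) < (m:ℝ) * (n + 1) / (n + m) := by
    apply div_pos (by nlinarith) (by linarith)
  have hval : ∀ t, g t ^ m = c ^ m →
      x t = k * ((n + m) / (m * (n + 1))) ^ (1 / n) := by
    intro t ht
    have h1 : 1 + g t ^ m = (m:ℝ) * (n + 1) / (n + m) := by
      rw [ht, hcm]; field_simp; ring
    rw [hx, h1,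
      show ((n + m) / ((m:ℝ) * (n + 1))) = ((m:ℝ) * (n + 1) / (n + m))⁻¹ by
        rw [inv_div],
      Real.inv_rpow hbase.le, div_eq_mul_inv]
  have hγn : γ * n ≠ 0 := by positivity
  refine ⟨hset, hval _ ?_, hval _ ?_⟩
  · have : g (t₀ + m * (A ^ ((1 : ℝ) / m) - c) / (γ * n)) = c := by
      rw [hg]; field_simp; ring
    rw [this]
  · have : g (t₀ + m * (A ^ ((1 : ℝ) / m) + c) / (γ * n)) = -c := by
      rw [hg]; field_simp; ring
    rw [this, hmeven.neg_pow]
end
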